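/- If the structure constants f satisfy the Jacobi identity, then in the jet algebra 𝒜 one has B_a E_a^{μν} = B_a^μ B_a^ν (sum over a) for all μ,ν; equivalently, the finite renormalizations satisfy N(T^{μν},T) = −N(T^μ,T^ν), where N(T^{μν},T) := −i B_a E_a^{μν} and N(T^μ,T^ν) := i B_a^μ B_a^ν. -/

import Mathlib

open scoped TensorProduct

noncomputable section

/-- Lorentz indices. -/
abbrev Idx : Type := Fin 4

/-- The Minkowski metric `η = diag(1,-1,-1,-1)`, as complex scalars. -/
def η (μ ν : Idx) : ℂ := if μ = ν then (if μ = 0 then 1 else -1) else 0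

/-- Even generators `v_{aμ;M}` of the jet algebra. -/
structure EvenGen (r : ℕ) : Type where
  a : Fin r
  μ : Idx
  M : Multiset Idx
deriving DecidableEq

/-- Odd generators of the jet algebra: `u_{a;M}` (`tilde = false`) and `ũ_{a;M}`
(`tilde = true`). -/
structure OddGen (r : ℕ) : Type where
  tilde : Bool
  a : Fin r
  M : Multiset Idx
deriving DecidableEq

/-- The jet algebra `𝒜` of pure Yang-Mills: the free ℤ₂-graded-commutative unital
ℂ-algebra on the even generators `v_{aμ;M}` and the odd generators `u_{a;M}`, `ũ_{a;M}`,
realized concretely as the tensor product of the commutative polynomial algebra on the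
even generators with the exterior algebra of the free ℂ-module on the odd generators. -/
abbrev Jet (r : ℕ) : Type :=
  MvPolynomial (EvenGen r) ℂ ⊗[ℂ] ExteriorAlgebra ℂ (OddGen r →₀ ℂ)

variable {r : ℕ}

/-- The generator `v_{aμ;M}` as an element of `𝒜`. -/
def vGen (a : Fin r) (μ : Idx) (M : Multiset Idx) : Jet r :=
  MvPolynomial.X ⟨a, μ, M⟩ ⊗ₜ[ℂ] 1

/-- The generator `u_{a;M}` as an element of `𝒜`. -/
def uGen (a : Fin r) (M : Multiset Idx) : Jet r :=
  1 ⊗ₜ[ℂ] ExteriorAlgebra.ι ℂ (Finsupp.single ⟨false, a, M⟩ (1 : ℂ))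

/-- The generator `ũ_{a;M}` as an element of `𝒜`. -/
def utGen (a : Fin r) (M : Multiset Idx) : Jet r :=
  1 ⊗ₜ[ℂ] ExteriorAlgebra.ι ℂ (Finsupp.single ⟨true, a, M⟩ (1 : ℂ))

/-- Data of the formal derivatives `d_ν`, the grading (parity) automorphism `σ`
(which is `+1` on even elements and `-1` on odd elements, so that the graded Leibniz
rule for the odd derivation `d_Q` can be written as `d_Q(xy) = (d_Q x) y + σ(x) d_Q y`),
and the gauge variation `d_Q`, together with their defining properties.
Since `𝒜` is generated by the generators, these properties determine `d_ν`, `σ`, `d_Q`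
uniquely. -/
structure DerData (r : ℕ) where
  /-- the formal derivative `d_ν` -/
  d : Idx → Jet r →ₗ[ℂ] Jet r
  /-- the parity automorphism -/
  σ : Jet r →ₐ[ℂ] Jet r
  /-- the gauge variation `d_Q` -/
  dQ : Jet r →ₗ[ℂ] Jet r
  d_mul : ∀ (ν : Idx) (x y : Jet r), d ν (x * y) = d ν x * y + x * d ν y
  d_v : ∀ (ν : Idx) (a : Fin r) (μ : Idx) (M : Multiset Idx),
    d ν (vGen a μ M) = vGen a μ (ν ::ₘ M)
  d_u : ∀ (ν : Idx) (a : Fin r) (M : Multiset Idx), d ν (uGen a M) = uGen a (ν ::ₘ M)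
  d_ut : ∀ (ν : Idx) (a : Fin r) (M : Multiset Idx), d ν (utGen a M) = utGen a (ν ::ₘ M)
  σ_v : ∀ (a : Fin r) (μ : Idx) (M : Multiset Idx), σ (vGen a μ M) = vGen a μ M
  σ_u : ∀ (a : Fin r) (M : Multiset Idx), σ (uGen a M) = - uGen a M
  σ_ut : ∀ (a : Fin r) (M : Multiset Idx), σ (utGen a M) = - utGen a M
  dQ_mul : ∀ x y : Jet r, dQ (x * y) = dQ x * y + σ x * dQ y
  dQ_v : ∀ (a : Fin r) (μ : Idx) (M : Multiset Idx),
    dQ (vGen a μ M) = Complex.I • uGen a (μ ::ₘ M)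
  dQ_u : ∀ (a : Fin r) (M : Multiset Idx), dQ (uGen a M) = 0
  dQ_ut : ∀ (a : Fin r) (M : Multiset Idx),
    dQ (utGen a M) = (-Complex.I) • ∑ ρ : Idx, ∑ s : Idx, η ρ s • vGen a ρ (s ::ₘ M)

/-- The wave-equation elements `η^{ρσ} ξ_{;M+{ρ,σ}}`, for `ξ` any generator. -/
def IsWave (w : Jet r) : Prop :=
  (∃ (a : Fin r) (μ : Idx) (M : Multiset Idx),
      w = ∑ ρ : Idx, ∑ s : Idx, η ρ s • vGen a μ (ρ ::ₘ s ::ₘ M)) ∨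
  (∃ (a : Fin r) (M : Multiset Idx),
      w = ∑ ρ : Idx, ∑ s : Idx, η ρ s • uGen a (ρ ::ₘ s ::ₘ M)) ∨
  (∃ (a : Fin r) (M : Multiset Idx),
      w = ∑ ρ : Idx, ∑ s : Idx, η ρ s • utGen a (ρ ::ₘ s ::ₘ M))

/-- The equations-of-motion ideal `I`: the two-sided ideal of `𝒜` generated by the
wave-equation elements (as a ℂ-subspace, the span of all `p * w * q` with `w` a
wave-equation element). -/
def eom (r : ℕ) : Submodule ℂ (Jet r) :=
  Submodule.span ℂ {x : Jet r | ∃ w p q : Jet r, IsWave w ∧ x = p * w * q}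

/-- The raised formal derivative `d^μ = η^{μν} d_ν`. -/
def dUp (D : DerData r) (μ : Idx) (x : Jet r) : Jet r := ∑ ν : Idx, η μ ν • D.d ν x

/-- `v_a^μ := η^{μν} v_{aν}`. -/
def vUp (a : Fin r) (μ : Idx) : Jet r := ∑ ν : Idx, η μ ν • vGen a ν 0

/-- The field strength `F_a^{μν} := d^μ v_a^ν - d^ν v_a^μ`. -/
def Fuu (D : DerData r) (a : Fin r) (μ ν : Idx) : Jet r :=
  dUp D μ (vUp a ν) - dUp D ν (vUp a μ)

/-- The lowered field strength `F_{aμν} := η_{μρ} η_{νσ} F_a^{ρσ}`. -/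
def Fdd (D : DerData r) (a : Fin r) (μ ν : Idx) : Jet r :=
  ∑ ρ : Idx, ∑ s : Idx, (η μ ρ * η ν s) • Fuu D a ρ s

variable (D : DerData r) (f : Fin r → Fin r → Fin r → ℝ)

/-- The Yang-Mills interaction Lagrangian
`T := f_{abc}(½ v_{aμ} v_{bν} F_c^{νμ} + u_a v_b^μ (d_μ ũ_c))`. -/
def Tint : Jet r :=
  ∑ a : Fin r, ∑ b : Fin r, ∑ c : Fin r, ((f a b c : ℝ) : ℂ) •
    ((2⁻¹ : ℂ) • ∑ μ : Idx, ∑ ν : Idx, vGen a μ 0 * vGen b ν 0 * Fuu D c ν μ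
      + ∑ μ : Idx, uGen a 0 * vUp b μ * D.d μ (utGen c 0))

/-- `T^μ := f_{abc}(u_a v_{bν} F_c^{νμ} - ½ u_a u_b (d^μ ũ_c))`. -/
def Tup (μ : Idx) : Jet r :=
  ∑ a : Fin r, ∑ b : Fin r, ∑ c : Fin r, ((f a b c : ℝ) : ℂ) •
    (∑ ν : Idx, uGen a 0 * vGen b ν 0 * Fuu D c ν μ
      - (2⁻¹ : ℂ) • (uGen a 0 * uGen b 0 * dUp D μ (utGen c 0)))

/-- `T^{μν} := ½ f_{abc} u_a u_b F_c^{μν}`. -/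
def Tupup (μ ν : Idx) : Jet r :=
  (2⁻¹ : ℂ) • ∑ a : Fin r, ∑ b : Fin r, ∑ c : Fin r, ((f a b c : ℝ) : ℂ) •
    (uGen a 0 * uGen b 0 * Fuu D c μ ν)

/-- The Wick submonomial `B_{aμ} := -f_{abc} u_b v_{cμ}`. -/
def Bdn (a : Fin r) (μ : Idx) : Jet r :=
  ∑ b : Fin r, ∑ c : Fin r, (-((f a b c : ℝ) : ℂ)) • (uGen b 0 * vGen c μ 0)

/-- `B_a^μ := η^{μν} B_{aν}`. -/
def Bup (a : Fin r) (μ : Idx) : Jet r := ∑ ν : Idx, η μ ν • Bdn f a ν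

/-- The Wick submonomial `C_{aμ} := f_{abc}(v_b^ν F_{cνμ} - u_b (d_μ ũ_c))`. -/
def Cdn (a : Fin r) (μ : Idx) : Jet r :=
  ∑ b : Fin r, ∑ c : Fin r, ((f a b c : ℝ) : ℂ) •
    (∑ ν : Idx, vUp b ν * Fdd D c ν μ - uGen b 0 * D.d μ (utGen c 0))

/-- `C_a^μ := η^{μν} C_{aν}`. -/
def Cup (a : Fin r) (μ : Idx) : Jet r := ∑ ν : Idx, η μ ν • Cdn D f a ν

/-- The Wick submonomial `D_a := f_{abc} v_b^μ (d_μ ũ_c)`. -/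
def Dgh (a : Fin r) : Jet r :=
  ∑ b : Fin r, ∑ c : Fin r, ((f a b c : ℝ) : ℂ) •
    ∑ μ : Idx, vUp b μ * D.d μ (utGen c 0)

/-- The Wick submonomial `E_{aμν} := f_{abc} v_{bμ} v_{cν}`. -/
def Edd (a : Fin r) (μ ν : Idx) : Jet r :=
  ∑ b : Fin r, ∑ c : Fin r, ((f a b c : ℝ) : ℂ) • (vGen b μ 0 * vGen c ν 0)

/-- `E_a^{μν} := η^{μρ} η^{νσ} E_{aρσ}`. -/
def Euu (a : Fin r) (μ ν : Idx) : Jet r :=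
  ∑ ρ : Idx, ∑ s : Idx, (η μ ρ * η ν s) • Edd f a ρ s

/-- The Wick submonomial `C_{aμν} := -f_{abc} u_b F_{cμν}`. -/
def Cdd (a : Fin r) (μ ν : Idx) : Jet r :=
  ∑ b : Fin r, ∑ c : Fin r, (-((f a b c : ℝ) : ℂ)) • (uGen b 0 * Fdd D c μ ν)

/-- `C_a^{μν} := η^{μρ} η^{νσ} C_{aρσ}`. -/
def Cuu (a : Fin r) (μ ν : Idx) : Jet r :=
  ∑ ρ : Idx, ∑ s : Idx, (η μ ρ * η ν s) • Cdd D f a ρ s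

/-- The Wick submonomial `B_a := ½ f_{abc} u_b u_c`. -/
def Bgh (a : Fin r) : Jet r :=
  (2⁻¹ : ℂ) • ∑ b : Fin r, ∑ c : Fin r, ((f a b c : ℝ) : ℂ) • (uGen b 0 * uGen c 0)

/-! With `[x, y]_a := f_{abc} x_b y_c` the claim reads `½ [u,u]_a [v_μ,v_ν]_a = [u,v_μ]_a [u,v_ν]_a`
(the indices are raised linearly, so lowered ones suffice). Since the `v`'s commute with the
ghosts, the right-hand side is `u_b u_d K_{bd}` with `K_{bd} = f_{abc} f_{ade} v_{cμ} v_{eν}`.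
The ghosts anticommute, so only `K_{bd} - K_{db}` contributes, and by the Jacobi identity this
equals `f_{abd} [v_μ,v_ν]_a`; hence twice the right-hand side is `[u,u]_a [v_μ,v_ν]_a`. -/

section StructureConstants

variable {ι K A : Type*} [Fintype ι]

theorem sum_smul_mul_sum_smul {α β γ R : Type*} [Fintype α] [Fintype β] [Fintype γ]
    [CommSemiring R] [Semiring A] [Algebra R A]
    (x : α → β → R) (y : α → γ → R) (p : β → A) (q : γ → A) :
    ∑ a, (∑ k, x a k • p k) * (∑ l, y a l • q l)
      = ∑ k, ∑ l, (∑ a, x a k * y a l) • (p k * q l) := by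
  simp only [Finset.sum_mul_sum, smul_mul_smul_comm, Finset.sum_smul]
  exact Finset.sum_comm_cycle.symm

theorem two_nsmul_sum_mul_eq_sum_mul_sub_swap [Ring A] (P Q : ι × ι → A)
    (hP : ∀ p, P p.swap = -P p) :
    2 • ∑ p, P p * Q p = ∑ p, P p * (Q p - Q p.swap) := by
  have hswap : ∑ p, P p * Q p = -∑ p, P p * Q p.swap := by
    rw [← (Equiv.prodComm ι ι).sum_comp]
    simp [hP, Finset.sum_neg_distrib]
  rw [two_nsmul]
  nth_rewrite 2 [hswap]
  simp only [← sub_eq_add_neg, ← Finset.sum_sub_distrib, mul_sub]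

theorem sum_mul_sub_mul_eq_of_jacobi [CommRing K] (f : ι → ι → ι → K)
    (hf : ∀ a b c, f a b c = -f a c b)
    (hJac : ∀ a b c d,
      ∑ e, (f e a b * f e c d + f e b c * f e a d + f e c a * f e b d) = 0)
    (b c d e : ι) :
    ∑ a, (f a b c * f a d e - f a d c * f a b e) = ∑ a, f a b d * f a c e := by
  rw [eq_comm, ← sub_eq_zero, ← Finset.sum_sub_distrib, ← hJac b d c e]
  refine Finset.sum_congr rfl fun a _ => ?_
  rw [hf a c b]
  ring

def structBracket [Semiring A] [SMul K A] (f : ι → ι → ι → K) (x y : ι → A) (a : ι) : A :=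
  ∑ p : ι × ι, f a p.1 p.2 • (x p.1 * y p.2)

section

variable [CommRing K] [Ring A] [Algebra K A]

theorem sum_structBracket_self_mul_structBracket (f : ι → ι → ι → K) (u v w : ι → A) :
    ∑ a, structBracket f u u a * structBracket f v w a
      = ∑ p : ι × ι, u p.1 * u p.2 *
          ∑ q : ι × ι, (∑ a, f a p.1 p.2 * f a q.1 q.2) • (v q.1 * w q.2) := by
  simp only [structBracket]
  rw [sum_smul_mul_sum_smul]
  simp only [Finset.mul_sum, mul_smul_comm, mul_assoc]

theorem sum_structBracket_mul_structBracket (f : ι → ι → ι → K) (u v w : ι → A)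
    (hvu : ∀ i j, v i * u j = u j * v i) :
    ∑ a, structBracket f u v a * structBracket f u w a
      = ∑ p : ι × ι, u p.1 * u p.2 *
          ∑ q : ι × ι, (∑ a, f a p.1 q.1 * f a p.2 q.2) • (v q.1 * w q.2) := by
  have hmono : ∀ b c d e, u b * v c * (u d * w e) = u b * u d * (v c * w e) := fun b c d e => by
    rw [mul_assoc, ← mul_assoc (v c), hvu, mul_assoc, mul_assoc]
  simp only [structBracket]
  rw [sum_smul_mul_sum_smul]
  simp only [hmono, Finset.mul_sum, mul_smul_comm, Fintype.sum_prod_type]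
  exact Finset.sum_congr rfl fun _ _ => Finset.sum_comm

theorem two_nsmul_sum_structBracket_mul_structBracket (f : ι → ι → ι → K)
    (hf : ∀ a b c, f a b c = -f a c b)
    (hJac : ∀ a b c d,
      ∑ e, (f e a b * f e c d + f e b c * f e a d + f e c a * f e b d) = 0)
    (u v w : ι → A) (hu : ∀ i j, u i * u j = -(u j * u i))
    (hvu : ∀ i j, v i * u j = u j * v i) :
    2 • ∑ a, structBracket f u v a * structBracket f u w a
      = ∑ a, structBracket f u u a * structBracket f v w a := by
  rw [sum_structBracket_mul_structBracket f u v w hvu,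
    two_nsmul_sum_mul_eq_sum_mul_sub_swap _ _ fun p => hu p.2 p.1,
    sum_structBracket_self_mul_structBracket]
  refine Finset.sum_congr rfl fun p _ => ?_
  simp only [Prod.fst_swap, Prod.snd_swap, ← Finset.sum_sub_distrib, ← sub_smul,
    sum_mul_sub_mul_eq_of_jacobi f hf hJac]

end

theorem sum_half_smul_structBracket_mul_structBracket [Field K] [NeZero (2 : K)] [Ring A]
    [Algebra K A] (f : ι → ι → ι → K) (hf : ∀ a b c, f a b c = -f a c b)
    (hJac : ∀ a b c d,
      ∑ e, (f e a b * f e c d + f e b c * f e a d + f e c a * f e b d) = 0)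
    (u v w : ι → A) (hu : ∀ i j, u i * u j = -(u j * u i))
    (hvu : ∀ i j, v i * u j = u j * v i) :
    ∑ a, (2⁻¹ : K) • structBracket f u u a * structBracket f v w a
      = ∑ a, structBracket f u v a * structBracket f u w a := by
  rw [← Finset.sum_congr rfl fun a _ => (smul_mul_assoc _ _ _).symm, ← Finset.smul_sum,
    ← two_nsmul_sum_structBracket_mul_structBracket f hf hJac u v w hu hvu,
    ← ofNat_smul_eq_nsmul K, smul_smul, inv_mul_cancel₀ two_ne_zero, one_smul]

end StructureConstants

theorem uGen_mul_uGen_comm (b c : Fin r) (M N : Multiset Idx) :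
    uGen b M * uGen c N = -(uGen c N * uGen b M) := by
  simp only [uGen, Algebra.TensorProduct.tmul_mul_tmul, one_mul, ← TensorProduct.tmul_neg]
  congr 1
  exact eq_neg_of_add_eq_zero_left (ExteriorAlgebra.ι_add_mul_swap _ _)

theorem vGen_mul_uGen_comm (b c : Fin r) (μ : Idx) (M N : Multiset Idx) :
    vGen b μ M * uGen c N = uGen c N * vGen b μ M := by
  simp only [uGen, vGen, Algebra.TensorProduct.tmul_mul_tmul, one_mul, mul_one]

theorem Bgh_eq_smul_structBracket (a : Fin r) :
    Bgh f a = (2⁻¹ : ℂ) • structBracket (fun a b c => (f a b c : ℂ))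
      (fun b => uGen b 0) (fun c => uGen c 0) a := by
  simp only [Bgh, structBracket, Fintype.sum_prod_type]

theorem Edd_eq_structBracket (a : Fin r) (μ ν : Idx) :
    Edd f a μ ν = structBracket (fun a b c => (f a b c : ℂ))
      (fun b => vGen b μ 0) (fun c => vGen c ν 0) a := by
  simp only [Edd, structBracket, Fintype.sum_prod_type]

theorem Bdn_eq_neg_structBracket (a : Fin r) (μ : Idx) :
    Bdn f a μ = -structBracket (fun a b c => (f a b c : ℂ))
      (fun b => uGen b 0) (fun c => vGen c μ 0) a := by
  simp only [Bdn, structBracket, Fintype.sum_prod_type, ← Finset.sum_neg_distrib]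
  exact Finset.sum_congr rfl fun b _ => Finset.sum_congr rfl fun c _ =>
    neg_smul (f a b c : ℂ) (uGen b 0 * vGen c μ 0)

theorem sum_Bgh_mul_Edd (hf : ∀ a b c, f a b c = -f a c b)
    (hJac : ∀ a b c d : Fin r,
      ∑ e, (f e a b * f e c d + f e b c * f e a d + f e c a * f e b d) = 0)
    (μ ν : Idx) :
    ∑ a, Bgh f a * Edd f a μ ν = ∑ a, Bdn f a μ * Bdn f a ν := by
  simp only [Bgh_eq_smul_structBracket, Edd_eq_structBracket, Bdn_eq_neg_structBracket]
  refine (sum_half_smul_structBracket_mul_structBracket (fun a b c => (f a b c : ℂ))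
    (fun a b c => by exact_mod_cast hf a b c) (fun a b c d => by exact_mod_cast hJac a b c d)
    (fun b => uGen b 0) (fun c => vGen c μ 0) (fun e => vGen e ν 0)
    (fun i j => uGen_mul_uGen_comm i j 0 0) (fun i j => vGen_mul_uGen_comm i j μ 0 0)).trans
    (Finset.sum_congr rfl fun a _ => (neg_mul_neg (α := Jet r) _ _).symm)

theorem sum_Bgh_mul_Euu (μ ν : Idx) :
    ∑ a, Bgh f a * Euu f a μ ν = ∑ ρ, ∑ σ, (η μ ρ * η ν σ) • ∑ a, Bgh f a * Edd f a ρ σ := by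
  simp only [Euu, Finset.mul_sum, mul_smul_comm, Finset.smul_sum]
  exact Finset.sum_comm_cycle.symm

theorem sum_Bup_mul_Bup (μ ν : Idx) :
    ∑ a, Bup f a μ * Bup f a ν = ∑ ρ, ∑ σ, (η μ ρ * η ν σ) • ∑ a, Bdn f a ρ * Bdn f a σ := by
  simp only [Bup, Finset.sum_mul_sum, smul_mul_smul_comm, Finset.smul_sum]
  exact Finset.sum_comm_cycle.symm

theorem BE_eq_BB_of_jacobi_general
    (r : ℕ) (f : Fin r → Fin r → Fin r → ℝ)
    (hf₂ : ∀ a b c, f a b c = - f a c b)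
    (hJac : ∀ a b c d : Fin r,
      (∑ e : Fin r, (f e a b * f e c d + f e b c * f e a d + f e c a * f e b d)) = 0) :
    (∀ μ ν : Idx,
        (∑ a : Fin r, Bgh f a * Euu f a μ ν) = ∑ a : Fin r, Bup f a μ * Bup f a ν) ∧
    (∀ μ ν : Idx,
        ((-Complex.I) • ∑ a : Fin r, Bgh f a * Euu f a μ ν : Jet r)
          = - (Complex.I • ∑ a : Fin r, Bup f a μ * Bup f a ν)) := by
  have h : ∀ μ ν : Idx,
      ∑ a : Fin r, Bgh f a * Euu f a μ ν = ∑ a : Fin r, Bup f a μ * Bup f a ν := fun μ ν => by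
    simp only [sum_Bgh_mul_Euu, sum_Bup_mul_Bup, sum_Bgh_mul_Edd f hf₂ hJac]
  exact ⟨h, fun μ ν => by rw [h]; exact neg_smul (M := Jet r) Complex.I _⟩

/-- If the structure constants satisfy the Jacobi identity, then
`B_a E_a^{μν} = B_a^μ B_a^ν` for all `μ,ν`; equivalently
`N(T^{μν},T) = -N(T^μ,T^ν)` where `N(T^{μν},T) := -i B_a E_a^{μν}` and
`N(T^μ,T^ν) := i B_a^μ B_a^ν`. -/
theorem BE_eq_BB_of_jacobi
    (r : ℕ) (hr : 1 ≤ r) (f : Fin r → Fin r → Fin r → ℝ)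
    (hf₁ : ∀ a b c, f a b c = - f b a c) (hf₂ : ∀ a b c, f a b c = - f a c b)
    (hJac : ∀ a b c d : Fin r,
      (∑ e : Fin r, (f e a b * f e c d + f e b c * f e a d + f e c a * f e b d)) = 0) :
    (∀ μ ν : Idx,
        (∑ a : Fin r, Bgh f a * Euu f a μ ν) = ∑ a : Fin r, Bup f a μ * Bup f a ν) ∧
    (∀ μ ν : Idx,
        ((-Complex.I) • ∑ a : Fin r, Bgh f a * Euu f a μ ν : Jet r)
          = - (Complex.I • ∑ a : Fin r, Bup f a μ * Bup f a ν)) :=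
  BE_eq_BB_of_jacobi_general r f hf₂ hJac

end
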